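/- arXiv:2206.10231 — 5 statements merged into one kernel-verified Lean document; each statement's English description precedes it below -/
import Mathlib

section
/- Let τ be a permutation of {1,...,n+m-3} of the form (j_1,...,j_{m-1}, i_1,...,i_{n-2}) where J = {j_1 < ... < j_{m-1}} and I = {i_1 < ... < i_{n-2}} partition {1,...,n+m-3}, and suppose the last n-t-2 indices i_{t+1},...,i_{n-2} equal t+m,...,n+m-3 and j_{m-1} = t+m-1. Then sgn(J,I)·(-1)^t = (-1)^{km}·sgn(σ), where k = t+m-1 and σ is the unshuffle in Sh(k-(m-1), m-2) obtained by restricting to the first k-1 permuted indices. -/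
/-!
The `t`-th power of the `k`-cycle `finRotate k` has sign `(-1)^((k-1)t)`, so the left-hand side
is `sgn σ · (-1)^((k-1)t + t) = sgn σ · (-1)^(kt)`. Since `t + m = k + 1`, the exponents `kt` and
`km` add up to `k(k+1)`, which is even.
-/

open Equiv

theorem Equiv.Perm.sign_mul_finRotate_pow {n : ℕ} (σ : Perm (Fin n)) (t : ℕ) :
    Perm.sign (σ * finRotate n ^ t) = Perm.sign σ * (-1) ^ ((n - 1) * t) := by
  rw [map_mul, map_pow, sign_finRotate, ← pow_mul]

theorem Nat.even_pred_mul_add_iff_even_mul {k t m : ℕ} (htk : t ≤ k) (h : t + m = k + 1) :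
    Even ((k - 1) * t + t) ↔ Even (k * m) := by
  rcases k with _ | k
  · obtain rfl : t = 0 := by omega
    simp
  · have hsum : (k + 1) * t + (k + 1) * m = (k + 1) * (k + 1 + 1) := by
      rw [← mul_add, h]
    have heven : Even ((k + 1) * t + (k + 1) * m) := hsum ▸ Nat.even_mul_succ_self (k + 1)
    rw [Nat.add_sub_cancel, ← succ_mul]
    exact Nat.even_add.mp heven

/-- the sign computation in the proof of Lemma 3.7.  The permutation
`(J,I) = (j_1,…,j_{m-1}, i_1,…,i_{n-2})` of `{1,…,N}` (with the last `n-t-2` of the `i`'s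
equal to `t+m,…,N` and `j_{m-1} = t+m-1`) has, after discarding the common fixed tail,
the form `σ ∘ (rotation by t)` on the first `k = t+m-1` indices, where
`σ ∈ Sh(k-(m-1), m-2)` is the unshuffle `(i_1,…,i_t, j_1,…,j_{m-2})` fixing the last
index.  The claim is `sgn(J,I)·(-1)^t = (-1)^{km}·sgn(σ)`. -/
theorem kw_sign_computation
    (k m : ℕ) (hm : 1 ≤ m) (hmk : m - 1 ≤ k)
    (t : ℕ) (ht : t = k - (m - 1))
    (σ : Equiv.Perm (Fin k)) :
    Equiv.Perm.sign (σ * (finRotate k) ^ t) * (-1) ^ t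
      = (-1) ^ (k * m) * Equiv.Perm.sign σ := by
  have htk : t ≤ k := by omega
  have hsum : t + m = k + 1 := by omega
  calc Perm.sign (σ * finRotate k ^ t) * (-1) ^ t
      = Perm.sign σ * (-1) ^ ((k - 1) * t + t) := by
        rw [Perm.sign_mul_finRotate_pow, mul_assoc, pow_add]
    _ = Perm.sign σ * (-1) ^ (k * m) := by
        rw [neg_one_pow_congr (Nat.even_pred_mul_add_iff_even_mul htk hsum)]
    _ = (-1) ^ (k * m) * Perm.sign σ := mul_comm _ _
end

section
/- Let E be a module over a commutative ring R with a symmetric R-bilinear form ⟨·,·⟩: E × E → R. Extend ⟨·,·⟩ to the exterior algebra Λ•E as a degree -2 operation satisfying: ⟨P,Q⟩ = -(-1)^{pq}⟨Q,P⟩ for P ∈ Λ^p E, Q ∈ Λ^q E; ⟨f,R⟩ = 0 for f of degree 0; the graded Leibniz rule ⟨P, Q∧R⟩ = ⟨P,Q⟩∧R + (-1)^{pq} Q∧⟨P,R⟩. Then for decomposable P = e_1∧...∧e_p and Q = e'_1∧...∧e'_q, one has ⟨P,Q⟩ = Σ_{s=1}^{q} Σ_{k=1}^{p} (-1)^{k-s+p+1}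 ⟨e_k, e'_s⟩ (e_1∧...∧ê_k∧...∧e_p) ∧ (e'_1∧...∧ê'_s∧...∧e'_q), where the hat denotes omission. -/
/-!
Pairing a vector `x` with a product `e'₁ ∧ ⋯ ∧ e'_q` is a graded derivation in the second
argument, so `⟨x, e'₁ ∧ ⋯ ∧ e'_q⟩ = ∑ₛ (-1)^(s-1) ⟨x, e'ₛ⟩ e'₁ ∧ ⋯ ê'ₛ ⋯ ∧ e'_q`. Graded
skew-symmetry turns the Leibniz rule into one in the first argument,
`⟨x ∧ y, z⟩ = x ∧ ⟨y, z⟩ + (-1)^(bc) ⟨x, z⟩ ∧ y`, and peeling `e₁` off `P` this way gives the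
formula by induction on `p`; the only sign to track is that of moving the `(q-1)`-vector
`e'₁ ∧ ⋯ ê'ₛ ⋯ ∧ e'_q` past the `(p-1)`-vector `e₂ ∧ ⋯ ∧ e_p`.
-/

open ExteriorAlgebra

/-- The submodule of homogeneous `p`-vectors in the exterior algebra. -/
noncomputable def extGrade (R : Type*) [CommRing R] (E : Type*) [AddCommGroup E]
    [Module R E] (p : ℕ) : Submodule R (ExteriorAlgebra R E) :=
  LinearMap.range (ExteriorAlgebra.ι R : E →ₗ[R] ExteriorAlgebra R E) ^ p

section Grading

variable {R : Type*} [CommRing R] {E : Type*} [AddCommGroup E] [Module R E]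

lemma one_mem_extGrade_zero : (1 : ExteriorAlgebra R E) ∈ extGrade R E 0 :=
  Submodule.one_le.mp (pow_zero _).ge

lemma ι_mem_extGrade_one (x : E) : ι R x ∈ extGrade R E 1 := by
  rw [extGrade, pow_one]
  exact LinearMap.mem_range_self _ x

lemma mul_mem_extGrade {a b : ℕ} {x y : ExteriorAlgebra R E}
    (hx : x ∈ extGrade R E a) (hy : y ∈ extGrade R E b) : x * y ∈ extGrade R E (a + b) := by
  rw [extGrade, pow_add]
  exact Submodule.mul_mem_mul hx hy

lemma list_prod_mem_extGrade {l : List (ExteriorAlgebra R E)}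
    (hl : ∀ x ∈ l, x ∈ extGrade R E 1) : l.prod ∈ extGrade R E l.length := by
  induction l with
  | nil => exact one_mem_extGrade_zero
  | cons x l ih =>
    rw [List.prod_cons, List.length_cons, add_comm]
    exact mul_mem_extGrade (hl x List.mem_cons_self) (ih fun y hy => hl y (.tail x hy))

lemma ofFn_ι_mem_extGrade_one {n : ℕ} (e : Fin n → E) :
    ∀ x ∈ List.ofFn fun i => ι R (e i), x ∈ extGrade R E 1 := by
  simp only [List.mem_ofFn, forall_exists_index, forall_apply_eq_imp_iff]
  exact fun i => ι_mem_extGrade_one (e i)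

lemma prod_ofFn_ι_mem_extGrade {n : ℕ} (e : Fin n → E) :
    (List.ofFn fun i => ι R (e i)).prod ∈ extGrade R E n := by
  simpa using list_prod_mem_extGrade (ofFn_ι_mem_extGrade_one e)

lemma mul_anticomm_of_mem_extGrade_one {x y : ExteriorAlgebra R E}
    (hx : x ∈ extGrade R E 1) (hy : y ∈ extGrade R E 1) : x * y = -(y * x) := by
  rw [extGrade, pow_one] at hx hy
  obtain ⟨u, rfl⟩ := hx
  obtain ⟨v, rfl⟩ := hy
  exact eq_neg_of_add_eq_zero_left (ι_add_mul_swap u v)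

lemma list_prod_mul_anticomm {l : List (ExteriorAlgebra R E)} {y : ExteriorAlgebra R E}
    (hl : ∀ x ∈ l, x ∈ extGrade R E 1) (hy : y ∈ extGrade R E 1) :
    l.prod * y = (-1 : ℤ) ^ l.length • (y * l.prod) := by
  induction l with
  | nil => simp
  | cons x l ih =>
    rw [List.prod_cons, mul_assoc, ih fun z hz => hl z (.tail x hz), mul_smul_comm, ← mul_assoc,
      mul_anticomm_of_mem_extGrade_one (hl x List.mem_cons_self) hy, List.length_cons, pow_succ,
      mul_comm, mul_smul, neg_mul, neg_one_smul, smul_neg, mul_assoc]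

lemma list_prod_mul_list_prod_anticomm {l m : List (ExteriorAlgebra R E)}
    (hl : ∀ x ∈ l, x ∈ extGrade R E 1) (hm : ∀ x ∈ m, x ∈ extGrade R E 1) :
    l.prod * m.prod = (-1 : ℤ) ^ (l.length * m.length) • (m.prod * l.prod) := by
  induction m with
  | nil => simp
  | cons y m ih =>
    rw [List.prod_cons, ← mul_assoc, list_prod_mul_anticomm hl (hm y List.mem_cons_self),
      smul_mul_assoc, mul_assoc, ih fun z hz => hm z (.tail y hz), mul_smul_comm, smul_smul,
      ← pow_add, ← mul_assoc, List.length_cons, mul_add_one, add_comm]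

end Grading

structure IsLeibnizExtension {R : Type*} [CommRing R] {E : Type*} [AddCommGroup E] [Module R E]
    (bil : E →ₗ[R] E →ₗ[R] R)
    (B : ExteriorAlgebra R E → ExteriorAlgebra R E → ExteriorAlgebra R E) : Prop where
  apply_ι_ι : ∀ e e' : E, B (ι R e) (ι R e') = algebraMap R (ExteriorAlgebra R E) (bil e e')
  skew : ∀ (p q : ℕ) (x y : ExteriorAlgebra R E),
    x ∈ extGrade R E p → y ∈ extGrade R E q → B x y = (-((-1 : ℤ) ^ (p * q))) • B y x
  apply_algebraMap_left : ∀ (f : R) (x : ExteriorAlgebra R E),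
    B (algebraMap R (ExteriorAlgebra R E) f) x = 0
  leibniz : ∀ (p q : ℕ) (x y z : ExteriorAlgebra R E),
    x ∈ extGrade R E p → y ∈ extGrade R E q →
    B x (y * z) = B x y * z + ((-1 : ℤ) ^ (p * q)) • (y * B x z)

namespace IsLeibnizExtension

variable {R : Type*} [CommRing R] {E : Type*} [AddCommGroup E] [Module R E]
  {bil : E →ₗ[R] E →ₗ[R] R} {B : ExteriorAlgebra R E → ExteriorAlgebra R E → ExteriorAlgebra R E}
  (h : IsLeibnizExtension bil B)
include h

lemma apply_one_right {p : ℕ} {x : ExteriorAlgebra R E} (hx : x ∈ extGrade R E p) : B x 1 = 0 := by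
  rw [h.skew p 0 x 1 hx one_mem_extGrade_zero, ← (algebraMap R (ExteriorAlgebra R E)).map_one,
    h.apply_algebraMap_left, smul_zero]

lemma leibniz_left {a b c : ℕ} {x y z : ExteriorAlgebra R E} (hx : x ∈ extGrade R E a)
    (hy : y ∈ extGrade R E b) (hz : z ∈ extGrade R E c) :
    B (x * y) z = x * B y z + (-1 : ℤ) ^ (b * c) • (B x z * y) := by
  rw [h.skew _ _ _ _ (mul_mem_extGrade hx hy) hz, h.leibniz c a z x y hz hx, h.skew c a z x hz hx,
    h.skew c b z y hz hy]
  have hsign₁ : -(-1 : ℤ) ^ ((a + b) * c) * ((-1) ^ (c * a) * -(-1) ^ (c * b)) = 1 := by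
    simp only [mul_neg, neg_mul, neg_neg, ← pow_add]
    exact Even.neg_one_pow ⟨(a + b) * c, by ring⟩
  have hsign₂ : -(-1 : ℤ) ^ ((a + b) * c) * -(-1) ^ (c * a) = (-1) ^ (b * c) := by
    rw [neg_mul_neg, ← pow_add, show (a + b) * c + c * a = b * c + 2 * (a * c) by ring, pow_add,
      (even_two_mul _).neg_one_pow, mul_one]
  simp only [smul_add, smul_mul_assoc, mul_smul_comm, smul_smul]
  rw [hsign₁, hsign₂, one_smul, add_comm]

lemma apply_ι_prod (x : E) {q : ℕ} (e' : Fin q → E) :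
    B (ι R x) (List.ofFn fun i => ι R (e' i)).prod
      = ∑ s : Fin q, (-1 : ℤ) ^ (s : ℕ) •
          bil x (e' s) • ((List.ofFn fun i => ι R (e' i)).eraseIdx s).prod := by
  induction q with
  | zero => simpa using h.apply_one_right (ι_mem_extGrade_one x)
  | succ q ih =>
    rw [List.ofFn_succ, List.prod_cons,
      h.leibniz 1 1 _ _ _ (ι_mem_extGrade_one x) (ι_mem_extGrade_one (e' 0)), h.apply_ι_ι,
      ← Algebra.smul_def, ih, Fin.sum_univ_succ]
    simp only [Fin.val_zero, pow_zero, one_smul, Fin.val_succ, List.eraseIdx_cons_zero,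
      List.eraseIdx_cons_succ, List.prod_cons, Finset.mul_sum, Finset.smul_sum, mul_smul_comm,
      smul_smul, pow_succ, mul_one, one_mul]
    congr 1
    exact Finset.sum_congr rfl fun s _ => by rw [mul_comm]

lemma apply_prod_prod {p q : ℕ} (e : Fin p → E) (e' : Fin q → E) :
    B (List.ofFn fun i => ι R (e i)).prod (List.ofFn fun i => ι R (e' i)).prod
      = ∑ s : Fin q, ∑ k : Fin p,
          ((Int.negOnePow ((k : ℤ) - (s : ℤ) + (p : ℤ) + 1) : ℤ)) •
            (bil (e k) (e' s) •
              (((List.ofFn fun i => ι R (e i)).eraseIdx k).prod *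
                ((List.ofFn fun i => ι R (e' i)).eraseIdx s).prod)) := by
  induction p with
  | zero =>
    rw [List.ofFn_zero, List.prod_nil, ← (algebraMap R (ExteriorAlgebra R E)).map_one,
      h.apply_algebraMap_left]
    simp only [Finset.univ_eq_empty, Finset.sum_empty, Finset.sum_const_zero]
  | succ p ih =>
    have hsign_head (s : Fin q) : (-1 : ℤ) ^ (p * q) * (-1) ^ (s : ℕ) * (-1) ^ ((q - 1) * p)
        = (((0 : ℕ) : ℤ) - s + (p + 1 : ℕ) + 1).negOnePow := by
      rw [← Int.coe_negOnePow_natCast, ← Int.coe_negOnePow_natCast, ← Int.coe_negOnePow_natCast,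
        ← Units.val_mul, ← Units.val_mul, ← Int.negOnePow_add, ← Int.negOnePow_add,
        Units.val_inj, Int.negOnePow_eq_iff]
      exact ⟨p * q + s - p - 1, by push_cast [Nat.cast_sub (Nat.one_le_of_lt s.isLt)]; ring⟩
    have hsign_tail (s : Fin q) (k : Fin p) :
        ((k.succ : ℤ) - s + (p + 1 : ℕ) + 1).negOnePow = ((k : ℤ) - s + p + 1).negOnePow := by
      rw [Fin.val_succ, show ((k + 1 : ℕ) : ℤ) - s + (p + 1 : ℕ) + 1 = (k - s + p + 1) + 1 + 1 by
        push_cast; ring, Int.negOnePow_succ, Int.negOnePow_succ, neg_neg]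
    rw [List.ofFn_succ, List.prod_cons, h.leibniz_left (ι_mem_extGrade_one (e 0))
      (prod_ofFn_ι_mem_extGrade _) (prod_ofFn_ι_mem_extGrade e'), ih, h.apply_ι_prod]
    simp only [Fin.sum_univ_succ (n := p), Finset.sum_add_distrib, Finset.mul_sum,
      Finset.sum_mul, Finset.smul_sum]
    rw [add_comm]
    congr 1
    · refine Finset.sum_congr rfl fun s _ => ?_
      have hcomm := list_prod_mul_list_prod_anticomm
        (fun x hx => ofFn_ι_mem_extGrade_one e' x (List.mem_of_mem_eraseIdx (i := s) hx))
        (ofFn_ι_mem_extGrade_one (R := R) fun i => e i.succ)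
      rw [List.length_eraseIdx_of_lt (by simp), List.length_ofFn, List.length_ofFn] at hcomm
      rw [Fin.val_zero, List.eraseIdx_cons_zero, smul_mul_assoc, smul_mul_assoc, hcomm,
        smul_comm (bil (e 0) (e' s)) ((-1 : ℤ) ^ ((q - 1) * p)), smul_smul, smul_smul,
        hsign_head]
    · refine Finset.sum_congr rfl fun s _ => Finset.sum_congr rfl fun k _ => ?_
      rw [hsign_tail, Fin.val_succ, List.eraseIdx_cons_succ, List.prod_cons, mul_assoc,
        mul_smul_comm, mul_smul_comm]

end IsLeibnizExtension

theorem extended_bilinear_form_explicit_formula_general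
    {R : Type*} [CommRing R] {E : Type*} [AddCommGroup E] [Module R E]
    (bil : E →ₗ[R] E →ₗ[R] R)
    (B : ExteriorAlgebra R E → ExteriorAlgebra R E → ExteriorAlgebra R E)
    -- `B` extends the bilinear form:
    (hbase : ∀ e e' : E, B (ι R e) (ι R e')
      = algebraMap R (ExteriorAlgebra R E) (bil e e'))
    -- graded skew-symmetry `⟨P,Q⟩ = -(-1)^{pq}⟨Q,P⟩`:
    (hskew : ∀ (p q : ℕ) (x y : ExteriorAlgebra R E),
      x ∈ extGrade R E p → y ∈ extGrade R E q →
      B x y = (-((-1 : ℤ) ^ (p * q))) • B y x)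
    -- `⟨f, R⟩ = 0` in degree `0`:
    (hzero : ∀ (f : R) (x : ExteriorAlgebra R E),
      B (algebraMap R (ExteriorAlgebra R E) f) x = 0)
    -- graded Leibniz rule `⟨P, Q∧R⟩ = ⟨P,Q⟩∧R + (-1)^{pq} Q∧⟨P,R⟩`:
    (hleib : ∀ (p q : ℕ) (x y z : ExteriorAlgebra R E),
      x ∈ extGrade R E p → y ∈ extGrade R E q →
      B x (y * z) = B x y * z + ((-1 : ℤ) ^ (p * q)) • (y * B x z)) :
    ∀ (p q : ℕ) (e : Fin p → E) (e' : Fin q → E),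
      B (List.ofFn fun i => ι R (e i)).prod (List.ofFn fun i => ι R (e' i)).prod
        = ∑ s : Fin q, ∑ k : Fin p,
            ((Int.negOnePow ((k : ℤ) - (s : ℤ) + (p : ℤ) + 1) : ℤ)) •
              (bil (e k) (e' s) •
                (((List.ofFn fun i => ι R (e i)).eraseIdx k).prod *
                  ((List.ofFn fun i => ι R (e' i)).eraseIdx s).prod)) :=
  fun _ _ e e' => IsLeibnizExtension.apply_prod_prod ⟨hbase, hskew, hzero, hleib⟩ e e'

/-- Lemma 4.1: the extension of a symmetric bilinear form `⟨·,·⟩` on `E`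
to the exterior algebra `Λ•E` as a degree `-2` operation satisfying graded
skew-symmetry, vanishing on degree `0`, and the graded Leibniz rule, is given on
decomposables by the explicit double-sum formula. -/
theorem extended_bilinear_form_explicit_formula
    {R : Type*} [CommRing R] {E : Type*} [AddCommGroup E] [Module R E]
    (bil : E →ₗ[R] E →ₗ[R] R) (hsymm : ∀ e e', bil e e' = bil e' e)
    (B : ExteriorAlgebra R E → ExteriorAlgebra R E → ExteriorAlgebra R E)
    (hadd₁ : ∀ x y z, B (x + y) z = B x z + B y z)
    (hadd₂ : ∀ x y z, B x (y + z) = B x y + B x z)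
    -- `B` extends the bilinear form:
    (hbase : ∀ e e' : E, B (ι R e) (ι R e')
      = algebraMap R (ExteriorAlgebra R E) (bil e e'))
    -- degree `-2`:
    (hdeg : ∀ (p q : ℕ) (x y : ExteriorAlgebra R E),
      x ∈ extGrade R E p → y ∈ extGrade R E q → B x y ∈ extGrade R E (p + q - 2))
    -- graded skew-symmetry `⟨P,Q⟩ = -(-1)^{pq}⟨Q,P⟩`:
    (hskew : ∀ (p q : ℕ) (x y : ExteriorAlgebra R E),
      x ∈ extGrade R E p → y ∈ extGrade R E q →
      B x y = (-((-1 : ℤ) ^ (p * q))) • B y x)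
    -- `⟨f, R⟩ = 0` in degree `0`:
    (hzero : ∀ (f : R) (x : ExteriorAlgebra R E),
      B (algebraMap R (ExteriorAlgebra R E) f) x = 0)
    -- graded Leibniz rule `⟨P, Q∧R⟩ = ⟨P,Q⟩∧R + (-1)^{pq} Q∧⟨P,R⟩`:
    (hleib : ∀ (p q : ℕ) (x y z : ExteriorAlgebra R E),
      x ∈ extGrade R E p → y ∈ extGrade R E q →
      B x (y * z) = B x y * z + ((-1 : ℤ) ^ (p * q)) • (y * B x z)) :
    ∀ (p q : ℕ) (e : Fin p → E) (e' : Fin q → E),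
      B (List.ofFn fun i => ι R (e i)).prod (List.ofFn fun i => ι R (e' i)).prod
        = ∑ s : Fin q, ∑ k : Fin p,
            ((Int.negOnePow ((k : ℤ) - (s : ℤ) + (p : ℤ) + 1) : ℤ)) •
              (bil (e k) (e' s) •
                (((List.ofFn fun i => ι R (e i)).eraseIdx k).prod *
                  ((List.ofFn fun i => ι R (e' i)).eraseIdx s).prod)) :=
  extended_bilinear_form_explicit_formula_general bil B hbase hskew hzero hleib
end

section
/- Let E be a module over a commutative ring R with a symmetric bilinear form ⟨·,·⟩ which is full, i.e. every f ∈ R is an R-linear combination of values ⟨e,e'⟩ with e, e' ∈ E. Let 𝔠 be a higher pre-multi-Courant structure with symbol σ_𝔠, satisfying 𝔠(P_1,...,P_{n-2}, e, e') + 𝔠(P_1,...,P_{n-2}, e', e) = σ_𝔠(P_1,...,P_{n-2})(⟨e,e'⟩). If 𝔠 is R-linear in its last entry, then for every f ∈ R, written as f = Σ a_i⟨e_i,e'_i⟩, the value σ_𝔠(P_1,...,P_{n-2})(f) is determined by 𝔠; in particular σ_𝔠 is uniquely determined by 𝔠. -/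
/-- if the symmetric bilinear form is full (every `f ∈ R` is a sum of
values `⟨e,e'⟩`), then the symbol of a higher pre-multi-Courant structure `𝔠`
(satisfying `𝔠(P₁,…,P_{n-2},e,e') + 𝔠(P₁,…,P_{n-2},e',e) = σ(P₁,…,P_{n-2})(⟨e,e'⟩)`
with `𝔠` `R`-linear in its last entry) is uniquely determined by `𝔠`. -/
theorem full_form_symbol_unique
    {R : Type*} [CommRing R] {E : Type*} [AddCommGroup E] [Module R E]
    {X : Type*} {W : Type*} [AddCommGroup W] [Module R W]
    (bil : E →ₗ[R] E →ₗ[R] R) (hsymm : ∀ e e', bil e e' = bil e' e)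
    -- fullness: every `f ∈ R` is a finite sum of values `⟨e,e'⟩`
    (hfull : ∀ f : R, ∃ l : List (E × E), f = (l.map fun p => bil p.1 p.2).sum)
    (k : ℕ) (𝔠 : (Fin k → X) → E → E → W)
    -- `𝔠` is `R`-linear in its last entry:
    (hlin : ∀ (Ps : Fin k → X) (e : E) (f : R) (e' e'' : E),
      𝔠 Ps e (f • e' + e'') = f • 𝔠 Ps e e' + 𝔠 Ps e e'')
    (σ₁ σ₂ : (Fin k → X) → R →+ W)
    (h₁ : ∀ (Ps : Fin k → X) (e e' : E),
      𝔠 Ps e e' + 𝔠 Ps e' e = σ₁ Ps (bil e e'))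
    (h₂ : ∀ (Ps : Fin k → X) (e e' : E),
      𝔠 Ps e e' + 𝔠 Ps e' e = σ₂ Ps (bil e e')) :
    σ₁ = σ₂ := by
  funext Ps
  ext f
  obtain ⟨l, rfl⟩ := hfull f
  induction l with
  | nil => simp
  | cons p l ih =>
      simp only [List.map_cons, List.sum_cons, map_add, ih]
      congr 1
      rw [← h₁ Ps p.1 p.2, h₂ Ps p.1 p.2]
end

section
/- Let E be an R-module with symmetric bilinear form ⟨·,·⟩, and let C : E×E → E with symbol ρ := σ_C : E → Der(R) be a binary pre-Courant structure. Then the explicit Keller–Waldmann bracket formula gives, for C_1 = C_2 = C ∈ C^3(E): [C,C]_{KW}(e_1,e_2,e_3) = 2( C(C(e_1,e_2),e_3) - C(e_1,C(e_2,e_3)) + C(e_2,C(e_1,e_3)) ). Consequently [C,C]_{KW} = 0 if and only if C satisfies the Leibniz identity C(e_1,C(e_2,e_3)) = C(C(e_1,e_2),e_3) + C(e_2,C(e_1,e_3)) for all e_1,e_2,e_3 ∈ E. -/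
/-- The interior product `ι_C C` for a binary bracket `C ∈ C³(E)` (`n = m = 3`),
given by the explicit Keller-Waldmann formula
`ι_{C₂}C₁(e₁,…) = Σ_{k=m-1}^{n+m-3} Σ_{τ∈Sh(k-(m-1),m-2)} sgn(τ)(-1)^{mk} C₁(…,C₂(…),…)`:
the `k = 2` term has trivial shuffle, and the `k = 3` term sums over `Sh(1,1)`. -/
noncomputable def iotaSelf3 {E : Type*} [AddCommGroup E] (C : E → E → E)
    (e₁ e₂ e₃ : E) : E :=
  ((-1 : ℤ) ^ (3 * 2)) • C (C e₁ e₂) e₃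
    + ∑ τ : Equiv.Perm (Fin 2),
        ((Equiv.Perm.sign τ : ℤ) * (-1 : ℤ) ^ (3 * 3)) •
          C (![e₁, e₂] (τ 0)) (C (![e₁, e₂] (τ 1)) e₃)

/-- `[C,C]_{KW} = ι_C C - (-1)^{3·3} ι_C C` for `C ∈ C³(E)`. -/
noncomputable def kwSelf3 {E : Type*} [AddCommGroup E] (C : E → E → E)
    (e₁ e₂ e₃ : E) : E :=
  iotaSelf3 C e₁ e₂ e₃ - ((-1 : ℤ) ^ (3 * 3)) • iotaSelf3 C e₁ e₂ e₃

/-- for a binary pre-Courant structure `C` with symbol `ρ`, the explicit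
Keller-Waldmann formula gives
`[C,C]_{KW}(e₁,e₂,e₃) = 2(C(C(e₁,e₂),e₃) - C(e₁,C(e₂,e₃)) + C(e₂,C(e₁,e₃)))`, and
`[C,C]_{KW} = 0` iff `C` satisfies the Leibniz (Dorfman) identity. -/
theorem kw_self_bracket_binary
    {R : Type*} [CommRing R] {E : Type*} [AddCommGroup E] [Module R E]
    [NoZeroSMulDivisors ℤ E]
    (bil : E →ₗ[R] E →ₗ[R] R) (hsymm : ∀ e e', bil e e' = bil e' e)
    (C : E → E → E) (ρ : E → Derivation ℤ R R)
    -- condition (3.1):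
    (h₁ : ∀ u v w : E, ρ u (bil v w) = bil (C u v) w + bil v (C u w))
    -- condition (3.2):
    (h₂ : ∀ u v e : E, bil (C u v + C v u) e = ρ e (bil u v)) :
    (∀ e₁ e₂ e₃ : E,
      kwSelf3 C e₁ e₂ e₃
        = (2 : ℤ) • (C (C e₁ e₂) e₃ - C e₁ (C e₂ e₃) + C e₂ (C e₁ e₃))) ∧
    ((∀ e₁ e₂ e₃ : E, kwSelf3 C e₁ e₂ e₃ = 0) ↔
      (∀ e₁ e₂ e₃ : E, C e₁ (C e₂ e₃) = C (C e₁ e₂) e₃ + C e₂ (C e₁ e₃))) := by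
  have key : ∀ e₁ e₂ e₃ : E,
      kwSelf3 C e₁ e₂ e₃
        = (2 : ℤ) • (C (C e₁ e₂) e₃ - C e₁ (C e₂ e₃) + C e₂ (C e₁ e₃)) := by
    intro e₁ e₂ e₃
    have huniv : (Finset.univ : Finset (Equiv.Perm (Fin 2)))
        = {1, Equiv.swap 0 1} := by decide
    simp only [kwSelf3, iotaSelf3, huniv]
    rw [Finset.sum_insert (by decide), Finset.sum_singleton]
    simp [Equiv.swap_apply_left, Equiv.swap_apply_right, two_smul]
    abel
  refine ⟨key, ?_⟩
  constructor
  · intro h e₁ e₂ e₃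
    have := h e₁ e₂ e₃
    rw [key] at this
    have h2 : C (C e₁ e₂) e₃ - C e₁ (C e₂ e₃) + C e₂ (C e₁ e₃) = 0 :=
      (smul_eq_zero_iff_right (by norm_num : (2:ℤ) ≠ 0)).mp this
    linear_combination (norm := abel) -h2
  · intro h e₁ e₂ e₃
    rw [key]
    have := h e₁ e₂ e₃
    have h2 : C (C e₁ e₂) e₃ - C e₁ (C e₂ e₃) + C e₂ (C e₁ e₃) = 0 := by
      linear_combination (norm := abel) -this
    rw [h2, smul_zero]
end

section
/- Let (A, ·, {·,·}) be a graded Poisson algebra of degree -2 with A^0 = R and A^1 = E, with {e,e'} = ⟨e,e'⟩ for e,e' ∈ E. Define Υ̃(Θ)(e_1,...,e_n) := {e_n,{...,{e_2,{e_1,Θ}}...}} ∈ R for Θ ∈ A^n. Then Υ̃ transforms products into shuffle products: Υ̃(Θ·Θ')(e_1,...,e_{m+n}) = Σ_{τ∈Sh(m,n)} sgn(τ) Υ̃(Θ)(e_{τ(1)},...,e_{τ(m)}) Υ̃(Θ')(e_{τ(m+1)},...,e_{τ(m+n)}) for Θ ∈ A^m, Θ' ∈ A^n, provided {f, e} = 0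 and {f,g} = 0 for f,g ∈ A^0, e ∈ A^1. -/
/-!
Peel off the first argument `e₁`. As `e₁` has degree one, the Leibniz rule reads
`{e₁, Θ Θ'} = {e₁, Θ} Θ' + (-1)^m Θ {e₁, Θ'}`. On the other side, an `(m, n)`-shuffle reads `e₁`
first in one of its two blocks; deleting it leaves an `(m - 1, n)`-shuffle, resp. an
`(m, n - 1)`-shuffle composed with the cycle moving position `m` to the front, of sign `(-1)^m`.
So both sides satisfy the same recursion in `m + n`. When `m = 0` or `n = 0` the only shuffle is
the identity, and the claim follows from `{e, f} = 0` for `deg f = 0`.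
-/

/-- `(m,n)`-unshuffles. -/
def isUnshuffle (m n : ℕ) (τ : Equiv.Perm (Fin (m + n))) : Prop :=
  (∀ i j : Fin (m + n), i < j → (j : ℕ) < m → τ i < τ j) ∧
  (∀ i j : Fin (m + n), i < j → m ≤ (i : ℕ) → τ i < τ j)

/-- Iterated derived bracket `{e_k, {…, {e_2, {e_1, Θ}}…}}`. -/
def iterBr {A : Type*} (pb : A → A → A) (Θ : A) (l : List A) : A :=
  l.foldl (fun acc x => pb x acc) Θ

open Equiv Finset

theorem List.ofFn_insertNth {α : Type*} {N : ℕ} (p : Fin (N + 1)) (x : α) (f : Fin N → α) :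
    List.ofFn (p.insertNth x f) = (List.ofFn f).take p ++ x :: (List.ofFn f).drop p := by
  obtain ⟨m, h⟩ := p
  induction m generalizing N with
  | zero => simp [Fin.insertNth_zero']
  | succ m ih =>
    obtain _ | N := N
    · omega
    have hsucc : (⟨m + 1, h⟩ : Fin (N + 2)) = (⟨m, by omega⟩ : Fin (N + 1)).succ := rfl
    rw [hsucc, ← Fin.cons_self_tail f, Fin.insertNth_succ_cons, List.ofFn_cons]
    rw [List.ofFn_cons, ih]
    rfl

namespace Equiv.Perm

variable {N : ℕ}

/-- Unlike `isUnshuffle`, the split point `m` is not part of the type `Fin (m + n)`, which spares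
the induction casts between `Fin (m + 1 + n)` and `Fin (m + n + 1)`. -/
def IsShuffle (m : ℕ) (τ : Perm (Fin N)) : Prop :=
  ∀ i j : Fin N, i < j → ((j : ℕ) < m ∨ m ≤ (i : ℕ)) → τ i < τ j

instance (m : ℕ) : DecidablePred (IsShuffle (N := N) m) :=
  fun _ => by unfold IsShuffle; infer_instance

theorem isShuffle_iff_eq_one {m : ℕ} (hm : m = 0 ∨ N ≤ m) {τ : Perm (Fin N)} :
    IsShuffle m τ ↔ τ = 1 := by
  have hblock : ∀ i j : Fin N, (j : ℕ) < m ∨ m ≤ (i : ℕ) := fun i j => by omega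
  refine ⟨fun hτ => DFunLike.coe_injective ?_, ?_⟩
  · exact StrictMono.eq_id fun i j hij => hτ i j hij (hblock i j)
  · rintro rfl i j hij -
    exact hij

theorem IsShuffle.apply_zero_or {m : ℕ} {τ : Perm (Fin (N + 1))} (hτ : IsShuffle m τ)
    (hm : m < N + 1) : τ 0 = 0 ∨ τ ⟨m, hm⟩ = 0 := by
  obtain ⟨q, hτq⟩ : ∃ q, τ q = 0 := ⟨τ.symm 0, τ.apply_symm_apply 0⟩
  by_contra! h
  rcases lt_or_ge (q : ℕ) m with hqm | hqm
  · have hpos : (0 : Fin (N + 1)) < q := Fin.pos_iff_ne_zero.2 fun h0 => h.1 (h0 ▸ hτq)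
    have := hτ 0 q hpos (.inl hqm)
    rw [hτq] at this
    exact Fin.not_lt_zero _ this
  · have hpos : (⟨m, hm⟩ : Fin (N + 1)) < q := lt_of_le_of_ne hqm fun h0 => h.2 (h0 ▸ hτq)
    have := hτ _ q hpos (.inr le_rfl)
    rw [hτq] at this
    exact Fin.not_lt_zero _ this

def insertZero (p : Fin (N + 1)) (σ : Perm (Fin N)) : Perm (Fin (N + 1)) :=
  decomposeFin.symm (0, σ) * p.cycleRange

@[simp]
theorem insertZero_apply_self (p : Fin (N + 1)) (σ : Perm (Fin N)) : insertZero p σ p = 0 := by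
  simp [insertZero]

@[simp]
theorem insertZero_apply_succAbove (p : Fin (N + 1)) (σ : Perm (Fin N)) (j : Fin N) :
    insertZero p σ (p.succAbove j) = (σ j).succ := by
  simp [insertZero]

theorem sign_insertZero (p : Fin (N + 1)) (σ : Perm (Fin N)) :
    sign (insertZero p σ) = (-1) ^ (p : ℕ) * sign σ := by
  simp [insertZero, mul_comm]

theorem comp_insertZero {α : Type*} (e : Fin (N + 1) → α) (p : Fin (N + 1)) (σ : Perm (Fin N)) :
    e ∘ insertZero p σ = p.insertNth (e 0) (Fin.tail e ∘ σ) := by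
  funext i
  cases i using Fin.succAboveCases p <;> simp [Fin.tail]

theorem sum_filter_and_apply_eq_zero {M : Type*} [AddCommMonoid M]
    (P : Perm (Fin (N + 1)) → Prop) [DecidablePred P] (p : Fin (N + 1))
    (f : Perm (Fin (N + 1)) → M) :
    ∑ τ ∈ univ.filter (fun τ => P τ ∧ τ p = 0), f τ
      = ∑ σ ∈ univ.filter (fun σ => P (insertZero p σ)), f (insertZero p σ) := by
  -- reparametrise `τ` by the pair `(τ p, σ)`
  rw [sum_filter, sum_filter,
    ← (decomposeFin.symm.trans (Equiv.mulRight p.cycleRange)).sum_comp, Fintype.sum_prod_type,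
    Fintype.sum_eq_single 0 fun q hq => by simp [hq]]
  exact sum_congr rfl fun σ _ => if_congr (by simp [insertZero]) rfl rfl

theorem isShuffle_insertZero_iff {p : Fin (N + 1)} {m m' : ℕ} {σ : Perm (Fin N)}
    (hblock : ∀ j : Fin N, (p.succAbove j : ℕ) < m ↔ (j : ℕ) < m')
    (hfirst : ∀ i < p, (i : ℕ) < m ∧ m ≤ p) :
    IsShuffle m (insertZero p σ) ↔ IsShuffle m' σ := by
  have hblock' : ∀ j : Fin N, m ≤ (p.succAbove j : ℕ) ↔ m' ≤ (j : ℕ) := fun j => by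
    simpa only [not_lt] using (hblock j).not
  constructor
  · intro hτ i j hij hb
    have := hτ _ _ (Fin.succAbove_lt_succAbove_iff.2 hij) (by rwa [hblock, hblock'])
    simpa using this
  · intro hσ i j hij hb
    cases i using Fin.succAboveCases p with
    | x =>
      cases j using Fin.succAboveCases p with
      | x => exact absurd hij (lt_irrefl _)
      | p j => simp
    | p i =>
      cases j using Fin.succAboveCases p with
      | x => have := hfirst _ hij; omega
      | p j =>
        simpa using hσ i j (Fin.succAbove_lt_succAbove_iff.1 hij) (by rwa [← hblock, ← hblock'])

theorem isShuffle_succ_insertZero_zero {m : ℕ} {σ : Perm (Fin N)} :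
    IsShuffle (m + 1) (insertZero 0 σ) ↔ IsShuffle m σ :=
  isShuffle_insertZero_iff (fun j => by simp) (fun i hi => absurd hi (Fin.not_lt_zero i))

theorem isShuffle_insertZero_mk {m : ℕ} (hm : m < N + 1) {σ : Perm (Fin N)} :
    IsShuffle m (insertZero ⟨m, hm⟩ σ) ↔ IsShuffle m σ := by
  refine isShuffle_insertZero_iff (fun j => ?_) (fun i hi => ⟨hi, le_rfl⟩)
  rcases lt_or_ge (j : ℕ) m with hj | hj
  · rw [Fin.succAbove_of_castSucc_lt _ _ hj]; simp [hj]
  · rw [Fin.succAbove_of_le_castSucc _ _ hj]; simp; omega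

end Equiv.Perm

theorem isUnshuffle_iff_isShuffle {m n : ℕ} {τ : Perm (Fin (m + n))} :
    isUnshuffle m n τ ↔ τ.IsShuffle m :=
  ⟨fun ⟨h₁, h₂⟩ i j hij hb => hb.elim (h₁ i j hij) (h₂ i j hij),
    fun h => ⟨fun i j hij hj => h i j hij (.inl hj), fun i j hij hi => h i j hij (.inr hi)⟩⟩

section Shuffle

open Equiv.Perm

variable {α M : Type*} [AddCommGroup M] {N : ℕ}

def shuffleSum (m : ℕ) (F : List α → List α → M) (e : Fin N → α) : M :=
  ∑ τ ∈ univ.filter (IsShuffle m), (sign τ : ℤ) •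
    F ((List.ofFn (e ∘ τ)).take m) ((List.ofFn (e ∘ τ)).drop m)

theorem shuffleSum_of_eq_zero_or_le {m : ℕ} (hm : m = 0 ∨ N ≤ m) (F : List α → List α → M)
    (e : Fin N → α) :
    shuffleSum m F e = F ((List.ofFn e).take m) ((List.ofFn e).drop m) := by
  have hone : univ.filter (IsShuffle (N := N) m) = {1} := by
    ext τ
    simp [isShuffle_iff_eq_one hm]
  simp [shuffleSum, hone]

theorem shuffleSum_zero (F : List α → List α → M) (e : Fin N → α) :
    shuffleSum 0 F e = F [] (List.ofFn e) := by
  simp [shuffleSum_of_eq_zero_or_le (.inl rfl)]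

theorem shuffleSum_self (F : List α → List α → M) (e : Fin N → α) :
    shuffleSum N F e = F (List.ofFn e) [] := by
  rw [shuffleSum_of_eq_zero_or_le (.inr le_rfl), List.take_of_length_le (by simp),
    List.drop_of_length_le (by simp)]

theorem ofFn_comp_insertZero (e : Fin (N + 1) → α) (p : Fin (N + 1)) (σ : Perm (Fin N)) :
    List.ofFn (e ∘ insertZero p σ)
      = (List.ofFn (Fin.tail e ∘ σ)).take p ++ e 0 :: (List.ofFn (Fin.tail e ∘ σ)).drop p := by
  rw [comp_insertZero, List.ofFn_insertNth]

theorem shuffleSum_succ {m : ℕ} (hm : m + 1 ≤ N) (F : List α → List α → M)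
    (e : Fin (N + 1) → α) :
    shuffleSum (m + 1) F e
      = shuffleSum m (fun l l' => F (e 0 :: l) l') (Fin.tail e)
        + ((-1) ^ (m + 1) : ℤ) • shuffleSum (m + 1) (fun l l' => F l (e 0 :: l')) (Fin.tail e) := by
  have hsplit : ∀ τ : Perm (Fin (N + 1)), IsShuffle (m + 1) τ →
      (¬τ 0 = 0 ↔ τ ⟨m + 1, by omega⟩ = 0) := fun τ hτ =>
    ⟨(hτ.apply_zero_or _).resolve_left, fun hp h0 => by
      simpa [Fin.ext_iff] using τ.injective (h0.trans hp.symm)⟩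
  unfold shuffleSum
  rw [← sum_filter_add_sum_filter_not _ (fun τ => τ 0 = 0), filter_filter, filter_filter,
    filter_congr (fun τ _ => and_congr_right (hsplit τ)), sum_filter_and_apply_eq_zero,
    sum_filter_and_apply_eq_zero, filter_congr (fun σ _ => isShuffle_succ_insertZero_zero),
    filter_congr (fun σ _ => isShuffle_insertZero_mk _), smul_sum]
  congr 1 <;> refine sum_congr rfl fun σ _ => ?_
  · rw [ofFn_comp_insertZero, sign_insertZero]
    simp
  · rw [ofFn_comp_insertZero, sign_insertZero]
    have hlen : ((List.ofFn (Fin.tail e ∘ σ)).take (m + 1)).length = m + 1 := by simp; omega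
    simp [List.take_left' hlen, List.drop_left' hlen, smul_smul]

end Shuffle

section IterBr

variable {A : Type*} {pb : A → A → A}

theorem iterBr_cons (Θ x : A) (l : List A) : iterBr pb Θ (x :: l) = iterBr pb (pb x Θ) l := rfl

theorem iterBr_add [Add A] (hadd : ∀ x y z : A, pb x (y + z) = pb x y + pb x z) (Θ Θ' : A)
    (l : List A) : iterBr pb (Θ + Θ') l = iterBr pb Θ l + iterBr pb Θ' l := by
  induction l generalizing Θ Θ' with
  | nil => rfl
  | cons x l ih => simp only [iterBr_cons, hadd, ih]

theorem iterBr_zsmul [AddGroup A] (hadd : ∀ x y z : A, pb x (y + z) = pb x y + pb x z) (k : ℤ)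
    (Θ : A) (l : List A) : iterBr pb (k • Θ) l = k • iterBr pb Θ l :=
  map_zsmul (AddMonoidHom.mk' (iterBr pb · l) (iterBr_add hadd · · l)) k Θ

end IterBr

section GradedBracket

variable {A : Type*} [Ring A] {𝒜 : ℕ → AddSubgroup A} {pb : A → A → A}

theorem iterBr_mul_of_mem_zero_left
    (hleib : ∀ (m : ℕ) (x y z : A), x ∈ 𝒜 1 → y ∈ 𝒜 m →
      pb x (y * z) = pb x y * z + ((-1) ^ m : ℤ) • (y * pb x z))
    (hpb : ∀ x f : A, x ∈ 𝒜 1 → f ∈ 𝒜 0 → pb x f = 0)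
    {f : A} (hf : f ∈ 𝒜 0) (Θ : A) {l : List A} (hl : ∀ x ∈ l, x ∈ 𝒜 1) :
    iterBr pb (f * Θ) l = f * iterBr pb Θ l := by
  induction l generalizing Θ with
  | nil => rfl
  | cons x l ih =>
    have hx := hl x List.mem_cons_self
    rw [iterBr_cons, hleib 0 x f Θ hx hf, hpb x f hx hf, zero_mul, zero_add, pow_zero, one_smul,
      ih _ fun y hy => hl y (List.mem_cons_of_mem x hy)]
    rfl

theorem iterBr_mul_of_mem_zero_right
    (hdeg : ∀ (m : ℕ) (x y : A), x ∈ 𝒜 1 → y ∈ 𝒜 (m + 1) → pb x y ∈ 𝒜 m)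
    (hleib : ∀ (m : ℕ) (x y z : A), x ∈ 𝒜 1 → y ∈ 𝒜 m →
      pb x (y * z) = pb x y * z + ((-1) ^ m : ℤ) • (y * pb x z))
    (hpb : ∀ x f : A, x ∈ 𝒜 1 → f ∈ 𝒜 0 → pb x f = 0)
    {g : A} (hg : g ∈ 𝒜 0) {l : List A} (hl : ∀ x ∈ l, x ∈ 𝒜 1) {Θ : A} (hΘ : Θ ∈ 𝒜 l.length) :
    iterBr pb (Θ * g) l = iterBr pb Θ l * g := by
  induction l generalizing Θ with
  | nil => rfl
  | cons x l ih =>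
    have hx := hl x List.mem_cons_self
    rw [iterBr_cons, hleib _ x Θ g hx hΘ, hpb x g hx hg, mul_zero, smul_zero, add_zero,
      ih (fun y hy => hl y (List.mem_cons_of_mem x hy)) (hdeg _ x Θ hx hΘ)]
    rfl

theorem iterBr_mul_eq_shuffleSum (hadd : ∀ x y z : A, pb x (y + z) = pb x y + pb x z)
    (hdeg : ∀ (m : ℕ) (x y : A), x ∈ 𝒜 1 → y ∈ 𝒜 (m + 1) → pb x y ∈ 𝒜 m)
    (hleib : ∀ (m : ℕ) (x y z : A), x ∈ 𝒜 1 → y ∈ 𝒜 m →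
      pb x (y * z) = pb x y * z + ((-1) ^ m : ℤ) • (y * pb x z))
    (hpb : ∀ x f : A, x ∈ 𝒜 1 → f ∈ 𝒜 0 → pb x f = 0)
    {N m n : ℕ} (hN : m + n = N) {Θ Θ' : A} (hΘ : Θ ∈ 𝒜 m) (hΘ' : Θ' ∈ 𝒜 n)
    (e : Fin N → A) (he : ∀ i, e i ∈ 𝒜 1) :
    iterBr pb (Θ * Θ') (List.ofFn e)
      = shuffleSum m (fun l l' => iterBr pb Θ l * iterBr pb Θ' l') e := by
  have hl : ∀ x ∈ List.ofFn e, x ∈ 𝒜 1 := fun x hx => by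
    obtain ⟨i, rfl⟩ := List.mem_ofFn.1 hx
    exact he i
  rcases m with _ | m
  · rw [shuffleSum_zero, iterBr_mul_of_mem_zero_left hleib hpb hΘ Θ' hl]
    rfl
  rcases n with _ | n
  · subst hN
    rw [shuffleSum_self, iterBr_mul_of_mem_zero_right hdeg hleib hpb hΘ' hl (by simpa using hΘ)]
    rfl
  obtain _ | N := N
  · omega
  have he' : ∀ i, e (Fin.succ i) ∈ 𝒜 1 := fun i => he i.succ
  rw [List.ofFn_succ, iterBr_cons, hleib _ _ _ _ (he 0) hΘ, iterBr_add hadd, iterBr_zsmul hadd,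
    iterBr_mul_eq_shuffleSum hadd hdeg hleib hpb (by omega) (hdeg _ _ _ (he 0) hΘ) hΘ' _ he',
    iterBr_mul_eq_shuffleSum hadd hdeg hleib hpb (by omega) hΘ (hdeg _ _ _ (he 0) hΘ') _ he',
    shuffleSum_succ (by omega)]
  rfl
termination_by N

end GradedBracket

open scoped Classical in
theorem upsilon_tilde_multiplicative_general
    {A : Type*} [Ring A]
    (𝒜 : ℕ → AddSubgroup A)
    (pb : A → A → A)
    (hadd₂ : ∀ x y z : A, pb x (y + z) = pb x y + pb x z)
    (hdeg : ∀ (n m : ℕ) (x y : A), x ∈ 𝒜 n → y ∈ 𝒜 m → pb x y ∈ 𝒜 (n + m - 2))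
    -- graded skew-symmetry:
    (hskew : ∀ (n m : ℕ) (x y : A), x ∈ 𝒜 n → y ∈ 𝒜 m →
      pb x y = -((Int.negOnePow (((n : ℤ) - 2) * ((m : ℤ) - 2)) : ℤ) • pb y x))
    -- graded Leibniz rule:
    (hleib : ∀ (n m : ℕ) (x y z : A), x ∈ 𝒜 n → y ∈ 𝒜 m →
      pb x (y * z) = pb x y * z
        + (Int.negOnePow (((n : ℤ) - 2) * (m : ℤ)) : ℤ) • (y * pb x z))
    -- `{f,g} = 0` and `{f,e} = 0` in low degrees:
    (h01 : ∀ f e : A, f ∈ 𝒜 0 → e ∈ 𝒜 1 → pb f e = 0) :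
    ∀ (m n : ℕ) (Θ Θ' : A), Θ ∈ 𝒜 m → Θ' ∈ 𝒜 n →
      ∀ e : Fin (m + n) → A, (∀ i, e i ∈ 𝒜 1) →
        iterBr pb (Θ * Θ') (List.ofFn e)
          = ∑ τ ∈ Finset.univ.filter (isUnshuffle m n),
              (Equiv.Perm.sign τ : ℤ) •
                (iterBr pb Θ (List.ofFn fun i : Fin m => e (τ (Fin.castAdd n i))) *
                  iterBr pb Θ' (List.ofFn fun i : Fin n => e (τ (Fin.natAdd m i)))) := by
  have hdeg₁ : ∀ (k : ℕ) (x y : A), x ∈ 𝒜 1 → y ∈ 𝒜 (k + 1) → pb x y ∈ 𝒜 k :=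
    fun k x y hx hy => (show 1 + (k + 1) - 2 = k by omega) ▸ hdeg 1 (k + 1) x y hx hy
  have hleib₁ : ∀ (k : ℕ) (x y z : A), x ∈ 𝒜 1 → y ∈ 𝒜 k →
      pb x (y * z) = pb x y * z + ((-1) ^ k : ℤ) • (y * pb x z) := fun k x y z hx hy => by
    rw [hleib 1 k x y z hx hy, show (((1 : ℕ) : ℤ) - 2) * k = -k by push_cast; ring,
      Int.negOnePow_neg, Int.coe_negOnePow_natCast]
  have hpb₀ : ∀ x f : A, x ∈ 𝒜 1 → f ∈ 𝒜 0 → pb x f = 0 := fun x f hx hf => by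
    rw [hskew 1 0 x f hx hf, h01 f x hf hx, smul_zero, neg_zero]
  intro m n Θ Θ' hΘ hΘ' e he
  rw [iterBr_mul_eq_shuffleSum hadd₂ hdeg₁ hleib₁ hpb₀ rfl hΘ hΘ' e he, shuffleSum,
    filter_congr fun τ _ => isUnshuffle_iff_isShuffle.symm]
  refine sum_congr rfl fun τ _ => ?_
  rw [List.ofFn_add, List.take_left' List.length_ofFn, List.drop_left' List.length_ofFn]
  rfl

open scoped Classical in
/-- in a graded Poisson algebra of degree `-2` with
`{A⁰,A⁰} = {A⁰,A¹} = 0`, the map `Υ̃(Θ)(e_1,…,e_n) = {e_n,{…,{e_1,Θ}…}}` transforms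
products into shuffle products. -/
theorem upsilon_tilde_multiplicative
    {A : Type*} [Ring A]
    (𝒜 : ℕ → AddSubgroup A)
    (pb : A → A → A)
    (hadd₁ : ∀ x y z : A, pb (x + y) z = pb x z + pb y z)
    (hadd₂ : ∀ x y z : A, pb x (y + z) = pb x y + pb x z)
    (hdeg : ∀ (n m : ℕ) (x y : A), x ∈ 𝒜 n → y ∈ 𝒜 m → pb x y ∈ 𝒜 (n + m - 2))
    (hmul : ∀ (n m : ℕ) (x y : A), x ∈ 𝒜 n → y ∈ 𝒜 m → x * y ∈ 𝒜 (n + m))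
    -- graded skew-symmetry:
    (hskew : ∀ (n m : ℕ) (x y : A), x ∈ 𝒜 n → y ∈ 𝒜 m →
      pb x y = -((Int.negOnePow (((n : ℤ) - 2) * ((m : ℤ) - 2)) : ℤ) • pb y x))
    -- graded Leibniz rule:
    (hleib : ∀ (n m : ℕ) (x y z : A), x ∈ 𝒜 n → y ∈ 𝒜 m →
      pb x (y * z) = pb x y * z
        + (Int.negOnePow (((n : ℤ) - 2) * (m : ℤ)) : ℤ) • (y * pb x z))
    -- `{f,g} = 0` and `{f,e} = 0` in low degrees:
    (h00 : ∀ f g : A, f ∈ 𝒜 0 → g ∈ 𝒜 0 → pb f g = 0)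
    (h01 : ∀ f e : A, f ∈ 𝒜 0 → e ∈ 𝒜 1 → pb f e = 0) :
    ∀ (m n : ℕ) (Θ Θ' : A), Θ ∈ 𝒜 m → Θ' ∈ 𝒜 n →
      ∀ e : Fin (m + n) → A, (∀ i, e i ∈ 𝒜 1) →
        iterBr pb (Θ * Θ') (List.ofFn e)
          = ∑ τ ∈ Finset.univ.filter (isUnshuffle m n),
              (Equiv.Perm.sign τ : ℤ) •
                (iterBr pb Θ (List.ofFn fun i : Fin m => e (τ (Fin.castAdd n i))) *
                  iterBr pb Θ' (List.ofFn fun i : Fin n => e (τ (Fin.natAdd m i)))) :=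
  upsilon_tilde_multiplicative_general 𝒜 pb hadd₂ hdeg hskew hleib h01
end
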